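/- arXiv:2604.19483 — 4 statements merged into one kernel-verified Lean document; each statement's English description precedes it below -/
import Mathlib

section
/- On the open set where 1 + y ≠ 0, the function H₂(x,y) = (x² + y²)/(1 + y)² is a first integral of the quadratic system ẋ = -y + x², ẏ = x(1 + y); that is, (-y + x²)·∂H₂/∂x + x(1+y)·∂H₂/∂y = 0 wherever 1 + y ≠ 0. -/
lemma hasDerivAt_sq_add_div (c d x : ℝ) :
    HasDerivAt (fun t : ℝ => (t ^ 2 + c) / d) (2 * x / d) x := by
  simpa using ((hasDerivAt_pow 2 x).add_const c).div_const d

lemma hasDerivAt_add_sq_div_one_add_sq (a : ℝ) {y : ℝ} (hy : 1 + y ≠ 0) :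
    HasDerivAt (fun t : ℝ => (a + t ^ 2) / (1 + t) ^ 2) (2 * (y - a) / (1 + y) ^ 3) y := by
  have hnum : HasDerivAt (fun t : ℝ => a + t ^ 2) (2 * y) y := by
    simpa using (hasDerivAt_pow 2 y).const_add a
  have hden : HasDerivAt (fun t : ℝ => (1 + t) ^ 2) (2 * (1 + y)) y := by
    simpa using ((hasDerivAt_id' y).const_add 1).fun_pow 2
  refine (hnum.div hden (pow_ne_zero 2 hy)).congr_deriv ?_
  field_simp
  ring

/-- On the set where `1 + y ≠ 0`, `H₂(x,y) = (x² + y²)/(1 + y)²` is a first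
integral of `ẋ = -y + x²`, `ẏ = x(1 + y)`. -/
theorem stmt2 :
    ∀ x y : ℝ, 1 + y ≠ 0 →
      (-y + x^2) * deriv (fun x' : ℝ => (x'^2 + y^2) / (1 + y)^2) x
        + x * (1 + y) * deriv (fun y' : ℝ => (x^2 + y'^2) / (1 + y')^2) y
        = 0 := by
  intro x y hy
  rw [(hasDerivAt_sq_add_div _ _ x).deriv, (hasDerivAt_add_sq_div_one_add_sq _ hy).deriv]
  field_simp
  ring
end

section
/- On the open set where -3 + 16y ≠ 0, the function H₃(x,y) = (9(x² + y²) - 24x²y + 16x⁴)/(-3 + 16y) is a first integral of the quadratic system ẋ = -y - (4/3)x², ẏ = x(1 - (16/3)y); that is, (-y - (4/3)x²)·∂H₃/∂x + x(1 - (16/3)y)·∂H₃/∂y = 0 wherever -3 + 16y ≠ 0. -/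
/-- On the set where `-3 + 16y ≠ 0`, `H₃(x,y) = (9(x²+y²) - 24x²y + 16x⁴)/(-3+16y)`
is a first integral of `ẋ = -y - (4/3)x²`, `ẏ = x(1 - (16/3)y)`. -/
theorem stmt3 :
    ∀ x y : ℝ, -3 + 16 * y ≠ 0 →
      (-y - (4/3) * x^2) *
          deriv (fun x' : ℝ => (9 * (x'^2 + y^2) - 24 * x'^2 * y + 16 * x'^4) / (-3 + 16 * y)) x
        + x * (1 - (16/3) * y) *
          deriv (fun y' : ℝ => (9 * (x^2 + y'^2) - 24 * x^2 * y' + 16 * x^4) / (-3 + 16 * y')) y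
        = 0 := by
  intro x y hy
  have h1 : HasDerivAt (fun x' : ℝ => (9 * (x'^2 + y^2) - 24 * x'^2 * y + 16 * x'^4) / (-3 + 16 * y))
      ((9 * (2*x) - 24 * (2*x) * y + 16 * (4*x^3)) / (-3 + 16 * y)) x := by
    have : HasDerivAt (fun x' : ℝ => 9 * (x'^2 + y^2) - 24 * x'^2 * y + 16 * x'^4)
        (9 * (2*x) - 24 * (2*x) * y + 16 * (4*x^3)) x := by
      have h := (((hasDerivAt_pow 2 x).add_const (y^2)).const_mul 9).sub
        (((hasDerivAt_pow 2 x).const_mul 24).mul_const y) |>.add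
        ((hasDerivAt_pow 4 x).const_mul 16)
      convert h using 1
      · rfl
      · rfl
      · rfl
      · norm_num <;> ring
    exact this.div_const _
  have hN : HasDerivAt (fun y' : ℝ => 9 * (x^2 + y'^2) - 24 * x^2 * y' + 16 * x^4)
      (9 * (2*y) - 24 * x^2) y := by
    have h := (((hasDerivAt_pow 2 y).const_add (x^2)).const_mul 9).sub
      ((hasDerivAt_id y).const_mul (24 * x^2)) |>.add_const (16 * x^4)
    convert h using 1
    · rfl
    · rfl
    · rfl
    · norm_num <;> ring
  have hD : HasDerivAt (fun y' : ℝ => -3 + 16 * y') (16 : ℝ) y := by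
    simpa using ((hasDerivAt_id y).const_mul (16:ℝ)).const_add (-3:ℝ)
  have h2 : HasDerivAt (fun y' : ℝ => (9 * (x^2 + y'^2) - 24 * x^2 * y' + 16 * x^4) / (-3 + 16 * y')) _ y := hN.div hD hy
  rw [h1.deriv, h2.deriv]
  field_simp
  ring
end

section
/- On the open set where 3 + 8y ≠ 0, the function H₄(x,y) = (9(x² + y²) + 24y³ + 16y⁴)/(3 + 8y)⁴ is a first integral of the quadratic system ẋ = -y + (16/3)x² - (4/3)y², ẏ = x(1 + (8/3)y); that is, (-y + (16/3)x² - (4/3)y²)·∂H₄/∂x + x(1 + (8/3)y)·∂H₄/∂y = 0 wherever 3 + 8y ≠ 0. -/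
/-- On the set where `3 + 8y ≠ 0`, `H₄(x,y) = (9(x²+y²) + 24y³ + 16y⁴)/(3+8y)⁴`
is a first integral of `ẋ = -y + (16/3)x² - (4/3)y²`, `ẏ = x(1 + (8/3)y)`. -/
theorem stmt4 :
    ∀ x y : ℝ, 3 + 8 * y ≠ 0 →
      (-y + (16/3) * x^2 - (4/3) * y^2) *
          deriv (fun x' : ℝ => (9 * (x'^2 + y^2) + 24 * y^3 + 16 * y^4) / (3 + 8 * y)^4) x
        + x * (1 + (8/3) * y) *
          deriv (fun y' : ℝ => (9 * (x^2 + y'^2) + 24 * y'^3 + 16 * y'^4) / (3 + 8 * y')^4) y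
        = 0 := by
  intro x y hy
  have hD : ((3 + 8 * y)^4 : ℝ) ≠ 0 := pow_ne_zero _ hy
  have h1 : HasDerivAt (fun x' : ℝ => (9 * (x'^2 + y^2) + 24 * y^3 + 16 * y^4) / (3 + 8 * y)^4)
      ((9 * (2 * x)) / (3 + 8 * y)^4) x := by
    have : HasDerivAt (fun x' : ℝ => 9 * (x'^2 + y^2) + 24 * y^3 + 16 * y^4)
        (9 * (2 * x)) x := by
      have hx : HasDerivAt (fun x' : ℝ => x'^2) (2 * x) x := by
        simpa using (hasDerivAt_pow 2 x)
      simpa using (((hx.add_const (y^2)).const_mul 9).add_const (24 * y^3)).add_const (16 * y^4)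
    simpa using this.div_const ((3 + 8 * y)^4)
  have h2 : HasDerivAt (fun y' : ℝ => (9 * (x^2 + y'^2) + 24 * y'^3 + 16 * y'^4) / (3 + 8 * y')^4)
      (((9 * (2 * y) + 24 * (3 * y^2) + 16 * (4 * y^3)) * (3 + 8 * y)^4
        - (9 * (x^2 + y^2) + 24 * y^3 + 16 * y^4) * (4 * (3 + 8 * y)^3 * 8))
        / ((3 + 8 * y)^4)^2) y := by
    have hy2 : HasDerivAt (fun y' : ℝ => y'^2) (2 * y) y := by simpa using hasDerivAt_pow 2 y
    have hy3 : HasDerivAt (fun y' : ℝ => y'^3) (3 * y^2) y := by simpa using hasDerivAt_pow 3 y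
    have hy4 : HasDerivAt (fun y' : ℝ => y'^4) (4 * y^3) y := by simpa using hasDerivAt_pow 4 y
    have hN : HasDerivAt (fun y' : ℝ => 9 * (x^2 + y'^2) + 24 * y'^3 + 16 * y'^4)
        (9 * (2 * y) + 24 * (3 * y^2) + 16 * (4 * y^3)) y := by
      exact (((hy2.const_add (x^2)).const_mul 9).add (hy3.const_mul 24)).add (hy4.const_mul 16)
    have hlin : HasDerivAt (fun y' : ℝ => 3 + 8 * y') (8 : ℝ) y := by
      simpa using (hasDerivAt_id y).const_mul (8 : ℝ) |>.const_add (3 : ℝ)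
    have hDd : HasDerivAt (fun y' : ℝ => (3 + 8 * y')^4) (4 * (3 + 8 * y)^3 * 8) y := by
      simpa using hlin.fun_pow 4
    exact hN.div hDd hD
  rw [h1.deriv, h2.deriv]
  field_simp
  ring
end

section
/- Consider H_S(x,y) = -0.00965661x² - (12/25)xy + 0.00457079y² - 0.0309612x - (3/100)y and H₄(x,y) = [9((-1/100 + (53/100)x - (37/100)y)² + (-3/100 + x/2 + y/2)²) + 24(-3/100 + x/2 + y/2)³ + 16(-3/100 + x/2 + y/2)⁴] / (3 + 8(-3/100 + x/2 + y/2))⁴. Then the system of closing conditions H_S(x,0) = H_S(0,y), H₄(x,0) = H₄(0,y) has at least four solutions (x,y) with x > 0 and y > 0. -/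
noncomputable def Xf (y : ℝ) : ℝ :=
  (-(309612/10^7) + Real.sqrt ((309612/10^7)^2
      - 4*(965661/10^8)*((457079/10^8)*y^2 - (3/100)*y))) / (2*(965661/10^8))

noncomputable def uf (x : ℝ) : ℝ :=
  (9 * ((-1/100 + (53/100) * x)^2 + (-3/100 + x/2)^2)
    + 24 * (-3/100 + x/2)^3 + 16 * (-3/100 + x/2)^4) / (3 + 8 * (-3/100 + x/2))^4

noncomputable def vf (y : ℝ) : ℝ :=
  (9 * ((-1/100 - (37/100) * y)^2 + (-3/100 + y/2)^2)
    + 24 * (-3/100 + y/2)^3 + 16 * (-3/100 + y/2)^4) / (3 + 8 * (-3/100 + y/2))^4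

noncomputable def psi (y : ℝ) : ℝ := uf (Xf y) - vf y

lemma Xf_nonneg (y : ℝ) (h0 : 0 ≤ y) (h4 : y ≤ 4) : 0 ≤ Xf y := by
  have hd : ((309612/10^7:ℝ))^2 ≤ (309612/10^7)^2
      - 4*(965661/10^8)*((457079/10^8)*y^2 - (3/100)*y) := by nlinarith
  have hs : (309612/10^7:ℝ) ≤ Real.sqrt ((309612/10^7)^2
      - 4*(965661/10^8)*((457079/10^8)*y^2 - (3/100)*y)) :=
    Real.le_sqrt_of_sq_le hd
  rw [Xf]
  apply div_nonneg (by linarith) (by norm_num)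

lemma Xf_pos (y : ℝ) (h0 : 0 < y) (h4 : y ≤ 4) : 0 < Xf y := by
  have hd : ((309612/10^7:ℝ))^2 < (309612/10^7)^2
      - 4*(965661/10^8)*((457079/10^8)*y^2 - (3/100)*y) := by nlinarith
  have hs : (309612/10^7:ℝ) < Real.sqrt ((309612/10^7)^2
      - 4*(965661/10^8)*((457079/10^8)*y^2 - (3/100)*y)) :=
    Real.lt_sqrt_of_sq_lt hd
  rw [Xf]
  apply div_pos (by linarith) (by norm_num)

lemma HX (y : ℝ) (h0 : 0 ≤ y) (h4 : y ≤ 4) :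
    (965661/10^8)*(Xf y)^2 + (309612/10^7)*(Xf y)
      + ((457079/10^8)*y^2 - (3/100)*y) = 0 := by
  have hdnn : (0:ℝ) ≤ (309612/10^7)^2
      - 4*(965661/10^8)*((457079/10^8)*y^2 - (3/100)*y) := by nlinarith
  rw [Xf]
  set s := Real.sqrt ((309612/10^7)^2
      - 4*(965661/10^8)*((457079/10^8)*y^2 - (3/100)*y)) with hsd
  have hs : s^2 = (309612/10^7)^2
      - 4*(965661/10^8)*((457079/10^8)*y^2 - (3/100)*y) := Real.sq_sqrt hdnn
  field_simp
  nlinarith [hs]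

-- bracketing lemma
lemma Xf_mem (y d s1 : ℝ) (hd : (309612/10^7)^2
      - 4*(965661/10^8)*((457079/10^8)*y^2 - (3/100)*y) = d)
    (h1 : s1^2 ≤ d) (h2 : d ≤ (s1 + 1/10^12)^2) (hs1 : 0 ≤ s1) :
    (-(309612/10^7) + s1) / (2*(965661/10^8)) ≤ Xf y ∧
      Xf y ≤ (-(309612/10^7) + (s1 + 1/10^12)) / (2*(965661/10^8)) := by
  have hl : s1 ≤ Real.sqrt d := Real.le_sqrt_of_sq_le h1
  have hr : Real.sqrt d ≤ s1 + 1/10^12 := by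
    rw [show s1 + 1/10^12 = Real.sqrt ((s1 + 1/10^12)^2) from
      (Real.sqrt_sq (by linarith)).symm]
    exact Real.sqrt_le_sqrt h2
  rw [Xf, hd]
  constructor <;> apply div_le_div_of_nonneg_right (by linarith) (by norm_num)

lemma e1 : psi (3/10) < 0 := by
  obtain ⟨h1, h2⟩ := Xf_mem (3/10) (322586016082029/250000000000000000) (8980339861/250000000000)
    (by norm_num) (by norm_num) (by norm_num) (by norm_num)
  have h1' : (6420679001/25000000000:ℝ) ≤ Xf (3/10) := le_trans (by norm_num) h1
  have h2' : Xf (3/10) ≤ 25682716011/100000000000 := le_trans h2 (by norm_num)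
  have hq : vf (3/10) = (7653969/25000000) / (96059601/390625) := by norm_num [vf]
  have hu : uf (Xf (3/10)) < (7653969/25000000) / (96059601/390625) := by
    set x := Xf (3/10) with hx
    have hd : (0:ℝ) < (3 + 8 * (-3/100 + x/2))^4 := by
      have : (0:ℝ) < 3 + 8 * (-3/100 + x/2) := by nlinarith
      positivity
    rw [uf, div_lt_div_iff₀ hd (by norm_num)]
    nlinarith [mul_nonneg (sub_nonneg.2 h1') (sub_nonneg.2 h2'),
      sq_nonneg (x - 6420679001/25000000000), sq_nonneg x]
  have hp : psi (3/10) = uf (Xf (3/10)) - vf (3/10) := rfl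
  rw [hp, hq]
  linarith

lemma e2 : 0 < psi (9/20) := by
  obtain ⟨h1, h2⟩ := Xf_mem (9/20) (1444300792938261/1000000000000000000) (7600791519/200000000000)
    (by norm_num) (by norm_num) (by norm_num) (by norm_num)
  have h1' : (36465993733/100000000000:ℝ) ≤ Xf (9/20) := le_trans (by norm_num) h1
  have h2' : Xf (9/20) ≤ 1823299687/5000000000 := le_trans h2 (by norm_num)
  have hq : vf (9/20) = (41184333/50000000) / (168896016/390625) := by norm_num [vf]
  have hu : (41184333/50000000) / (168896016/390625) < uf (Xf (9/20)) := by
    set x := Xf (9/20) with hx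
    have hd : (0:ℝ) < (3 + 8 * (-3/100 + x/2))^4 := by
      have : (0:ℝ) < 3 + 8 * (-3/100 + x/2) := by nlinarith
      positivity
    rw [uf, div_lt_div_iff₀ (by norm_num) hd]
    nlinarith [mul_nonneg (sub_nonneg.2 h1') (sub_nonneg.2 h2'),
      sq_nonneg (x - 36465993733/100000000000), sq_nonneg x]
  have hp : psi (9/20) = uf (Xf (9/20)) - vf (9/20) := rfl
  rw [hp, hq]
  linarith

lemma e3 : psi (1) < 0 := by
  obtain ⟨h1, h2⟩ := Xf_mem (1) (4852089399381/2500000000000000) (44054917543/1000000000000)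
    (by norm_num) (by norm_num) (by norm_num) (by norm_num)
  have h1' : (67796657123/100000000000:ℝ) ≤ Xf (1) := le_trans (by norm_num) h1
  have h2' : Xf (1) ≤ 6779665713/10000000000 := le_trans h2 (by norm_num)
  have hq : vf (1) = (5125157/781250) / (815730721/390625) := by norm_num [vf]
  have hu : uf (Xf (1)) < (5125157/781250) / (815730721/390625) := by
    set x := Xf (1) with hx
    have hd : (0:ℝ) < (3 + 8 * (-3/100 + x/2))^4 := by
      have : (0:ℝ) < 3 + 8 * (-3/100 + x/2) := by nlinarith
      positivity
    rw [uf, div_lt_div_iff₀ hd (by norm_num)]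
    nlinarith [mul_nonneg (sub_nonneg.2 h1') (sub_nonneg.2 h2'),
      sq_nonneg (x - 67796657123/100000000000), sq_nonneg x]
  have hp : psi (1) = uf (Xf (1)) - vf (1) := rfl
  rw [hp, hq]
  linarith

lemma e4 : 0 < psi (2) := by
  obtain ⟨h1, h2⟩ := Xf_mem (2) (1606230576681/625000000000000) (5069486091/100000000000)
    (by norm_num) (by norm_num) (by norm_num) (by norm_num)
  have h1' : (2043539183/2000000000:ℝ) ≤ Xf (2) := le_trans (by norm_num) h1
  have h2' : Xf (2) ≤ 25544239789/25000000000 := le_trans h2 (by norm_num)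
  have hq : vf (2) = (309996481/6250000) / (5236114321/390625) := by norm_num [vf]
  have hu : (309996481/6250000) / (5236114321/390625) < uf (Xf (2)) := by
    set x := Xf (2) with hx
    have hd : (0:ℝ) < (3 + 8 * (-3/100 + x/2))^4 := by
      have : (0:ℝ) < 3 + 8 * (-3/100 + x/2) := by nlinarith
      positivity
    rw [uf, div_lt_div_iff₀ (by norm_num) hd]
    nlinarith [mul_nonneg (sub_nonneg.2 h1') (sub_nonneg.2 h2'),
      sq_nonneg (x - 2043539183/2000000000), sq_nonneg x]
  have hp : psi (2) = uf (Xf (2)) - vf (2) := rfl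
  rw [hp, hq]
  linarith

lemma e5 : psi (3) < 0 := by
  obtain ⟨h1, h2⟩ := Xf_mem (3) (7114988485629/2500000000000000) (26673935753/500000000000)
    (by norm_num) (by norm_num) (by norm_num) (by norm_num)
  have h1' : (115913718717/100000000000:ℝ) ≤ Xf (3) := le_trans (by norm_num) h1
  have h2' : Xf (3) ≤ 115913718723/100000000000 := le_trans h2 (by norm_num)
  have hq : vf (3) = (283884489/1562500) / (18539817921/390625) := by norm_num [vf]
  have hu : uf (Xf (3)) < (283884489/1562500) / (18539817921/390625) := by
    set x := Xf (3) with hx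
    have hd : (0:ℝ) < (3 + 8 * (-3/100 + x/2))^4 := by
      have : (0:ℝ) < 3 + 8 * (-3/100 + x/2) := by nlinarith
      positivity
    rw [uf, div_lt_div_iff₀ hd (by norm_num)]
    nlinarith [mul_nonneg (sub_nonneg.2 h1') (sub_nonneg.2 h2'),
      sq_nonneg (x - 115913718717/100000000000), sq_nonneg x]
  have hp : psi (3) = uf (Xf (3)) - vf (3) := rfl
  rw [hp, hq]
  linarith
lemma psi_cont : ContinuousOn psi (Set.Icc (3/10:ℝ) 3) := by
  have hXc : Continuous Xf := by
    unfold Xf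
    apply Continuous.div_const
    exact continuous_const.add (Real.continuous_sqrt.comp (by continuity))
  have hXnn : ∀ y ∈ Set.Icc (3/10:ℝ) 3, (0:ℝ) ≤ Xf y :=
    fun y hy => Xf_nonneg y (by linarith [hy.1]) (by linarith [hy.2])
  unfold psi uf vf
  apply ContinuousOn.sub
  · apply ContinuousOn.div
    · apply Continuous.continuousOn; fun_prop
    · apply Continuous.continuousOn; fun_prop
    · intro y hy
      exact pow_ne_zero _ (ne_of_gt (by have := hXnn y hy; linarith))
  · apply ContinuousOn.div
    · apply Continuous.continuousOn; fun_prop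
    · apply Continuous.continuousOn; fun_prop
    · intro y hy
      exact pow_ne_zero _ (ne_of_gt (by have := hy.1; linarith))
/-- The explicit `(L_s)-(Q₄)` example: the system of closing conditions
`H_S(x,0) = H_S(0,y)`, `H₄(x,0) = H₄(0,y)` has at least four solutions with
`x > 0` and `y > 0`. -/
theorem stmt11 :
    let H_S : ℝ → ℝ → ℝ := fun x y =>
      -(965661/10^8) * x^2 - (12/25) * x * y + (457079/10^8) * y^2
        - (309612/10^7) * x - (3/100) * y
    let H₄ : ℝ → ℝ → ℝ := fun x y =>
      (9 * ((-1/100 + (53/100) * x - (37/100) * y)^2 + (-3/100 + x/2 + y/2)^2)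
        + 24 * (-3/100 + x/2 + y/2)^3 + 16 * (-3/100 + x/2 + y/2)^4)
      / (3 + 8 * (-3/100 + x/2 + y/2))^4
    ∃ p₁ p₂ p₃ p₄ : ℝ × ℝ,
      p₁ ≠ p₂ ∧ p₁ ≠ p₃ ∧ p₁ ≠ p₄ ∧ p₂ ≠ p₃ ∧ p₂ ≠ p₄ ∧ p₃ ≠ p₄ ∧
      (∀ p ∈ ({p₁, p₂, p₃, p₄} : Set (ℝ × ℝ)),
        0 < p.1 ∧ 0 < p.2 ∧ H_S p.1 0 = H_S 0 p.2 ∧ H₄ p.1 0 = H₄ 0 p.2) := by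
  intro H_S H₄
  obtain ⟨y₁, hy₁m, hy₁⟩ := intermediate_value_Icc (by norm_num : (3/10:ℝ) ≤ 9/20)
    (psi_cont.mono (Set.Icc_subset_Icc (by norm_num) (by norm_num)))
    (Set.mem_Icc.mpr ⟨le_of_lt e1, le_of_lt e2⟩)
  obtain ⟨y₂, hy₂m, hy₂⟩ := intermediate_value_Icc' (by norm_num : (9/20:ℝ) ≤ 1)
    (psi_cont.mono (Set.Icc_subset_Icc (by norm_num) (by norm_num)))
    (Set.mem_Icc.mpr ⟨le_of_lt e3, le_of_lt e2⟩)
  obtain ⟨y₃, hy₃m, hy₃⟩ := intermediate_value_Icc (by norm_num : (1:ℝ) ≤ 2)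
    (psi_cont.mono (Set.Icc_subset_Icc (by norm_num) (by norm_num)))
    (Set.mem_Icc.mpr ⟨le_of_lt e3, le_of_lt e4⟩)
  obtain ⟨y₄, hy₄m, hy₄⟩ := intermediate_value_Icc' (by norm_num : (2:ℝ) ≤ 3)
    (psi_cont.mono (Set.Icc_subset_Icc (by norm_num) (by norm_num)))
    (Set.mem_Icc.mpr ⟨le_of_lt e5, le_of_lt e4⟩)
  have h12 : y₁ ≠ y₂ := by
    intro h
    have h1 : y₁ = 9/20 := le_antisymm hy₁m.2 (h ▸ hy₂m.1)
    rw [h1] at hy₁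
    exact (ne_of_gt e2) hy₁
  have h23 : y₂ ≠ y₃ := by
    intro h
    have h1 : y₂ = 1 := le_antisymm hy₂m.2 (h ▸ hy₃m.1)
    rw [h1] at hy₂
    exact (ne_of_lt e3) hy₂
  have h34 : y₃ ≠ y₄ := by
    intro h
    have h1 : y₃ = 2 := le_antisymm hy₃m.2 (h ▸ hy₄m.1)
    rw [h1] at hy₃
    exact (ne_of_gt e4) hy₃
  have h13 : y₁ ≠ y₃ := by
    intro h; rw [h] at hy₁m; linarith [hy₁m.2, hy₃m.1]
  have h14 : y₁ ≠ y₄ := by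
    intro h; rw [h] at hy₁m; linarith [hy₁m.2, hy₄m.1]
  have h24 : y₂ ≠ y₄ := by
    intro h; rw [h] at hy₂m; linarith [hy₂m.2, hy₄m.1]
  have key : ∀ y : ℝ, 3/10 ≤ y → y ≤ 3 → psi y = 0 →
      0 < Xf y ∧ 0 < y ∧ H_S (Xf y) 0 = H_S 0 y ∧ H₄ (Xf y) 0 = H₄ 0 y := by
    intro y hl hr h0
    refine ⟨Xf_pos y (by linarith) (by linarith), by linarith, ?_, ?_⟩
    · have hx := HX y (by linarith) (by linarith)
      simp only [H_S]
      linear_combination -hx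
    · have h4 : uf (Xf y) = vf y := by
        have hps : psi y = uf (Xf y) - vf y := rfl
        rw [hps] at h0; linarith
      simp only [H₄]
      have hu : (9 * ((-1/100 + (53/100) * (Xf y) - (37/100) * 0)^2
            + (-3/100 + (Xf y)/2 + 0/2)^2)
          + 24 * (-3/100 + (Xf y)/2 + 0/2)^3 + 16 * (-3/100 + (Xf y)/2 + 0/2)^4)
          / (3 + 8 * (-3/100 + (Xf y)/2 + 0/2))^4 = uf (Xf y) := by
        rw [uf]; norm_num
      have hv : (9 * ((-1/100 + (53/100) * 0 - (37/100) * y)^2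
            + (-3/100 + 0/2 + y/2)^2)
          + 24 * (-3/100 + 0/2 + y/2)^3 + 16 * (-3/100 + 0/2 + y/2)^4)
          / (3 + 8 * (-3/100 + 0/2 + y/2))^4 = vf y := by
        rw [vf]; norm_num
      rw [hu, hv, h4]
  refine ⟨(Xf y₁, y₁), (Xf y₂, y₂), (Xf y₃, y₃), (Xf y₄, y₄),
    fun h => h12 (congrArg Prod.snd h), fun h => h13 (congrArg Prod.snd h),
    fun h => h14 (congrArg Prod.snd h), fun h => h23 (congrArg Prod.snd h),
    fun h => h24 (congrArg Prod.snd h), fun h => h34 (congrArg Prod.snd h), ?_⟩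
  intro p hp
  simp only [Set.mem_insert_iff, Set.mem_singleton_iff] at hp
  rcases hp with h | h | h | h <;> subst h
  · exact key y₁ hy₁m.1 (by linarith [hy₁m.2]) hy₁
  · exact key y₂ (by linarith [hy₂m.1]) (by linarith [hy₂m.2]) hy₂
  · exact key y₃ (by linarith [hy₃m.1]) (by linarith [hy₃m.2]) hy₃
  · exact key y₄ (by linarith [hy₄m.1]) (by linarith [hy₄m.2]) hy₄
end
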